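/- Let C ⊆ ℝⁿ be a polyhedral cone. Then ℝⁿ = ⋃_F (F − F^◇), the union over all faces F of C, where F^◇ = {c ∈ C^∨ : ⟨c,x⟩ = 0 for all x ∈ F} is the conjugate face in the polar cone C^∨ = {y : ⟨y,x⟩ ≥ 0 ∀x ∈ C}. Specifically, for every p ∈ ℝⁿ, if r is the nearest point of C to p and F is the face of C containing r in its relative interior, then p ∈ F − F^◇. -/

import Mathlib

open Set MeasureTheory Pointwise
open scoped RealInnerProductSpace

/-- The polar (dual) cone `C^∨ = {y : ⟪x, y⟫ ≥ 0 for all x ∈ C}`. -/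
def dualCone {n : ℕ} (C : Set (EuclideanSpace ℝ (Fin n))) :
    Set (EuclideanSpace ℝ (Fin n)) :=
  {y | ∀ x ∈ C, 0 ≤ ⟪x, y⟫}

/-- A polyhedral cone: a finite intersection of linear halfspaces. -/
def IsPolyhedralCone {n : ℕ} (C : Set (EuclideanSpace ℝ (Fin n))) : Prop :=
  ∃ s : Finset (EuclideanSpace ℝ (Fin n)), C = {x | ∀ w ∈ s, 0 ≤ ⟪w, x⟫}

/-- A face of the cone `C`: the intersection of `C` with a supporting hyperplane
through the origin (including `C` itself, via `u = 0`). -/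
def IsFaceOfCone {n : ℕ} (C F : Set (EuclideanSpace ℝ (Fin n))) : Prop :=
  ∃ u ∈ dualCone C, F = C ∩ {x | ⟪u, x⟫ = 0}

/-- The conjugate face `F^◇ = {c ∈ C^∨ : ⟪c, x⟫ = 0 for all x ∈ F}`. -/
def conjFace {n : ℕ} (C F : Set (EuclideanSpace ℝ (Fin n))) :
    Set (EuclideanSpace ℝ (Fin n)) :=
  {c ∈ dualCone C | ∀ x ∈ F, ⟪c, x⟫ = 0}

/-!
Project `p` onto the closed convex cone `C`, getting `r`. Because `C` is a cone, testing the
variational inequality of the projection against `0` and `2 • r` gives `⟪r - p, r⟫ = 0`, and then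
against arbitrary `x ∈ C` gives `r - p ∈ C^∨`. So `u := r - p` exposes the face
`F = C ∩ u^⊥`, which contains `r`, while `u ∈ F^◇`; hence `p = r - u ∈ F - F^◇`.
-/

variable {E : Type*} [NormedAddCommGroup E] [InnerProductSpace ℝ E]

namespace PointedCone

variable {K : PointedCone ℝ E} {p r : E}

theorem inner_sub_self_eq_zero_of_forall_inner_sub_nonpos (hr : r ∈ K)
    (hvar : ∀ w ∈ K, ⟪p - r, w - r⟫ ≤ 0) : ⟪r - p, r⟫ = 0 := by
  have h2r : ⟪p - r, r⟫ ≤ 0 := by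
    simpa [two_smul] using hvar ((2 : ℝ) • r) (K.smul_mem zero_le_two hr)
  have h0 : 0 ≤ ⟪p - r, r⟫ := by
    simpa [inner_neg_right] using hvar 0 K.zero_mem
  rw [← neg_sub, inner_neg_left, le_antisymm h2r h0, neg_zero]

theorem inner_sub_nonneg_of_forall_inner_sub_nonpos (hr : r ∈ K)
    (hvar : ∀ w ∈ K, ⟪p - r, w - r⟫ ≤ 0) {x : E} (hx : x ∈ K) : 0 ≤ ⟪x, r - p⟫ := by
  have hperp := inner_sub_self_eq_zero_of_forall_inner_sub_nonpos hr hvar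
  have hx' := hvar x hx
  rw [← neg_sub r p, inner_neg_left, inner_sub_right, hperp] at hx'
  rw [real_inner_comm]
  linarith

end PointedCone

theorem ProperCone.exists_sub_mem_innerDual_inner_eq_zero [CompleteSpace E]
    (K : ProperCone ℝ E) (p : E) :
    ∃ r ∈ K, r - p ∈ ProperCone.innerDual (K : Set E) ∧ ⟪r - p, r⟫ = 0 := by
  obtain ⟨r, hr, hmin⟩ := exists_norm_eq_iInf_of_complete_convex K.nonempty
    K.isClosed.isComplete K.convex p
  have hvar := (norm_eq_iInf_iff_real_inner_le_zero K.convex hr).mp hmin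
  refine ⟨r, hr, fun x hx ↦ ?_, ?_⟩
  · exact PointedCone.inner_sub_nonneg_of_forall_inner_sub_nonpos (K := K) hr hvar hx
  · exact PointedCone.inner_sub_self_eq_zero_of_forall_inner_sub_nonpos (K := K) hr hvar

section Euclidean

variable {n : ℕ} {C : Set (EuclideanSpace ℝ (Fin n))}

theorem IsPolyhedralCone.exists_properCone (hC : IsPolyhedralCone C) :
    ∃ K : ProperCone ℝ (EuclideanSpace ℝ (Fin n)), (K : Set _) = C := by
  obtain ⟨s, rfl⟩ := hC
  exact ⟨ProperCone.innerDual (s : Set _), by ext; simp⟩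

theorem sub_mem_face_sub_conjFace {u r : EuclideanSpace ℝ (Fin n)} (hu : u ∈ dualCone C)
    (hr : r ∈ C) (hur : ⟪u, r⟫ = 0) :
    r - u ∈ C ∩ {x | ⟪u, x⟫ = 0} - conjFace C (C ∩ {x | ⟪u, x⟫ = 0}) :=
  sub_mem_sub ⟨hr, hur⟩ ⟨hu, fun _ hx ↦ hx.2⟩

end Euclidean

/-- For a polyhedral cone `C`, `ℝⁿ = ⋃_F (F - F^◇)`, the union over all faces `F`
of `C`, where `F^◇` is the conjugate face in the polar cone. -/
theorem cone_face_decomposition {n : ℕ}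
    {C : Set (EuclideanSpace ℝ (Fin n))}
    (hpoly : IsPolyhedralCone C) :
    (⋃ F ∈ {F | IsFaceOfCone C F}, (F - conjFace C F)) = univ := by
  obtain ⟨K, rfl⟩ := hpoly.exists_properCone
  refine eq_univ_of_forall fun p ↦ ?_
  obtain ⟨r, hr, hdual, hperp⟩ := K.exists_sub_mem_innerDual_inner_eq_zero p
  refine mem_biUnion ⟨r - p, hdual, rfl⟩ ?_
  simpa only [sub_sub_cancel] using sub_mem_face_sub_conjFace hdual hr hperp
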